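/- arXiv:1505.03422 — 2 statements merged into one kernel-verified Lean document; each statement's English description precedes it below -/
import Mathlib

section
/- Let p ≥ 1, let t₀ < t_f be real numbers, let t̃₁, …, t̃_p ∈ [t₀, t_f] be quadrature nodes with weights w₁, …, w_p ∈ ℝ such that ∑ₖ wₖ q(t̃ₖ) = ∫_{t₀}^{t_f} q(t) dt for every real polynomial q of degree ≤ 2p − 1. Let n ≥ 1, let C be a symmetric n × n real matrix, and let h : ℝⁿ → ℝⁿ satisfy vᵀ C h(v) = 0 for all v ∈ ℝⁿ. Let y_h : ℝ → ℝⁿ be a map each of whose components is a polynomial of degree ≤ p, and suppose the collocation conditions y_h'(t̃ₖ) = h(y_h(t̃ₖ)) hold for k = 1, …, p. Then y_h(t_f)ᵀ C y_h(t_f) = y_h(t₀)ᵀ C y_h(t₀); that is, the mimetic canonical integrator exactly conserves quadratic first integrals. -/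
/-!
The quadratic form `Q(t) = y_h(t)ᵀ C y_h(t)` is a polynomial of degree at most `2p`, so its
derivative has degree at most `2p - 1` and is integrated exactly by the quadrature rule. At each
collocation node the derivative is, by symmetry of `C`, `2 y_hᵀ C h(y_h) = 0`, so the
quadrature sum vanishes, and by the fundamental theorem of calculus `Q(t_f) - Q(t₀) = 0`.
-/

open Polynomial Matrix

section QuadraticFormPolynomial

variable {R ι : Type*} [CommSemiring R] [Fintype ι]

theorem Polynomial.eval_dotProduct_map_C_mulVec (M : Matrix ι ι R) (P Q : ι → R[X]) (x : R) :
    (P ⬝ᵥ M.map C *ᵥ Q).eval x = (fun i ↦ (P i).eval x) ⬝ᵥ M *ᵥ fun i ↦ (Q i).eval x := by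
  rw [← coe_evalRingHom, RingHom.map_dotProduct]
  congr 1
  ext i
  rw [Function.comp_apply, RingHom.map_mulVec, Matrix.map_map]
  congr
  ext
  simp

theorem Polynomial.natDegree_dotProduct_map_C_mulVec_le (M : Matrix ι ι R) {P Q : ι → R[X]}
    {a b : ℕ} (hP : ∀ i, (P i).natDegree ≤ a) (hQ : ∀ i, (Q i).natDegree ≤ b) :
    (P ⬝ᵥ M.map C *ᵥ Q).natDegree ≤ a + b :=
  natDegree_sum_le_of_forall_le _ _ fun i _ ↦ natDegree_mul_le_of_le (hP i) <|
    natDegree_sum_le_of_forall_le _ _ fun j _ ↦ (natDegree_C_mul_le _ _).trans (hQ j)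

end QuadraticFormPolynomial

section QuadraticFormDeriv

variable {𝕜 ι κ : Type*} [NontriviallyNormedField 𝕜] [Fintype ι] {y z : 𝕜 → ι → 𝕜}
  {y' z' : ι → 𝕜} {t : 𝕜}

theorem HasDerivAt.dotProduct (hy : HasDerivAt y y' t) (hz : HasDerivAt z z' t) :
    HasDerivAt (fun s ↦ y s ⬝ᵥ z s) (y' ⬝ᵥ z t + y t ⬝ᵥ z') t := by
  unfold _root_.dotProduct
  rw [← Finset.sum_add_distrib]
  exact HasDerivAt.fun_sum fun i _ ↦ (hasDerivAt_pi.1 hy i).fun_mul (hasDerivAt_pi.1 hz i)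

theorem HasDerivAt.mulVec (M : Matrix κ ι 𝕜) (hy : HasDerivAt y y' t) :
    HasDerivAt (fun s ↦ M *ᵥ y s) (M *ᵥ y') t :=
  hasDerivAt_pi.2 fun i ↦ HasDerivAt.fun_sum fun j _ ↦ (hasDerivAt_pi.1 hy j).const_mul (M i j)

theorem HasDerivAt.dotProduct_mulVec_self {M : Matrix ι ι 𝕜} (hM : M.IsSymm)
    (hy : HasDerivAt y y' t) :
    HasDerivAt (fun s ↦ y s ⬝ᵥ M *ᵥ y s) (2 * (y t ⬝ᵥ M *ᵥ y')) t := by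
  convert hy.dotProduct (hy.mulVec M) using 1
  rw [two_mul, dotProduct_comm, dotProduct_mulVec, ← mulVec_transpose, hM.eq]

end QuadraticFormDeriv

theorem Polynomial.eval_eq_of_quadrature_of_derivative_eval_eq_zero {p : ℕ} {t₀ tf : ℝ}
    {tn w : Fin p → ℝ}
    (hquad : ∀ q : ℝ[X], q.natDegree ≤ 2 * p - 1 →
      ∑ k : Fin p, w k * q.eval (tn k) = ∫ t in t₀..tf, q.eval t)
    {Q : ℝ[X]} (hQ : Q.natDegree ≤ 2 * p) (hQ' : ∀ k, Q.derivative.eval (tn k) = 0) :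
    Q.eval tf = Q.eval t₀ := by
  have hexact := hquad Q.derivative ((natDegree_derivative_le Q).trans (Nat.sub_le_sub_right hQ 1))
  rw [intervalIntegral.integral_eq_sub_of_hasDerivAt (fun t _ ↦ Q.hasDerivAt t)
    (Q.derivative.continuous.intervalIntegrable _ _)] at hexact
  simp only [hQ', mul_zero, Finset.sum_const_zero] at hexact
  linarith

theorem mimetic_canonical_integrator_conserves_quadratic_invariants_general
    (p : ℕ) (t₀ tf : ℝ)
    (tn : Fin p → ℝ)
    (w : Fin p → ℝ)
    (hquad : ∀ q : Polynomial ℝ, q.natDegree ≤ 2 * p - 1 →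
      ∑ k : Fin p, w k * q.eval (tn k) = ∫ t in t₀..tf, q.eval t)
    (n : ℕ) (C : Matrix (Fin n) (Fin n) ℝ) (hC : C.IsSymm)
    (h : (Fin n → ℝ) → (Fin n → ℝ))
    (horth : ∀ v : Fin n → ℝ, dotProduct v (C.mulVec (h v)) = 0)
    (yh : ℝ → Fin n → ℝ)
    (P : Fin n → Polynomial ℝ) (hdeg : ∀ i, (P i).natDegree ≤ p)
    (hrep : ∀ t : ℝ, ∀ i : Fin n, yh t i = (P i).eval t)
    (hcolloc : ∀ k : Fin p, HasDerivAt yh (h (yh (tn k))) (tn k)) :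
    dotProduct (yh tf) (C.mulVec (yh tf)) =
      dotProduct (yh t₀) (C.mulVec (yh t₀)) := by
  set Q : ℝ[X] := P ⬝ᵥ C.map Polynomial.C *ᵥ P
  have hyh : yh = fun t i ↦ (P i).eval t := funext fun t ↦ funext (hrep t)
  have hQ_eval : (fun t ↦ Q.eval t) = fun t ↦ yh t ⬝ᵥ C *ᵥ yh t := by
    simp only [Q, eval_dotProduct_map_C_mulVec, hyh]
  have hQ_deg : Q.natDegree ≤ 2 * p :=
    two_mul p ▸ natDegree_dotProduct_map_C_mulVec_le C hdeg hdeg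
  have hQ'_nodes (k : Fin p) : Q.derivative.eval (tn k) = 0 := by
    have hQ_deriv := Q.hasDerivAt (tn k)
    rw [hQ_eval] at hQ_deriv
    rw [hQ_deriv.unique ((hcolloc k).dotProduct_mulVec_self hC), horth, mul_zero]
  simpa only [← congrFun hQ_eval] using
    eval_eq_of_quadrature_of_derivative_eval_eq_zero hquad hQ_deg hQ'_nodes

/-- The mimetic canonical integrator exactly conserves quadratic first
integrals: if the polynomial approximation `y_h` (componentwise of degree ≤ p)
satisfies the collocation conditions `y_h'(t̃ₖ) = h(y_h(t̃ₖ))` at `p` quadrature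
nodes whose rule is exact for polynomials of degree ≤ 2p − 1, and
`vᵀ C h(v) = 0` for all `v` with `C` symmetric, then
`y_h(t_f)ᵀ C y_h(t_f) = y_h(t₀)ᵀ C y_h(t₀)`. -/
theorem mimetic_canonical_integrator_conserves_quadratic_invariants
    (p : ℕ) (hp : 1 ≤ p) (t₀ tf : ℝ) (ht : t₀ < tf)
    (tn : Fin p → ℝ) (htn : ∀ k, tn k ∈ Set.Icc t₀ tf)
    (w : Fin p → ℝ)
    (hquad : ∀ q : Polynomial ℝ, q.natDegree ≤ 2 * p - 1 →
      ∑ k : Fin p, w k * q.eval (tn k) = ∫ t in t₀..tf, q.eval t)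
    (n : ℕ) (hn : 1 ≤ n) (C : Matrix (Fin n) (Fin n) ℝ) (hC : C.IsSymm)
    (h : (Fin n → ℝ) → (Fin n → ℝ))
    (horth : ∀ v : Fin n → ℝ, dotProduct v (C.mulVec (h v)) = 0)
    (yh : ℝ → Fin n → ℝ)
    (P : Fin n → Polynomial ℝ) (hdeg : ∀ i, (P i).natDegree ≤ p)
    (hrep : ∀ t : ℝ, ∀ i : Fin n, yh t i = (P i).eval t)
    (hcolloc : ∀ k : Fin p, HasDerivAt yh (h (yh (tn k))) (tn k)) :
    dotProduct (yh tf) (C.mulVec (yh tf)) =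
      dotProduct (yh t₀) (C.mulVec (yh t₀)) :=
  mimetic_canonical_integrator_conserves_quadratic_invariants_general p t₀ tf tn w hquad n C hC h
    horth yh P hdeg hrep hcolloc
end

section
/- Let p ≥ 1, m ≥ 1, let t₀ < t_f, let t̃₁ < ⋯ < t̃_p be distinct points of [t₀, t_f] with nonzero real weights w₁, …, w_p, and let l̃₁, …, l̃_p be the Lagrange basis polynomials of degree p − 1 at these nodes (l̃ⱼ(t̃ᵢ) = δᵢⱼ). Let J = [[0, I_m], [−I_m, 0]] be the standard 2m × 2m symplectic matrix and let H : ℝ^{2m} → ℝ be continuously differentiable with gradient ∇H. Let y_h : ℝ → ℝ^{2m} be a map each of whose components is a polynomial of degree ≤ p, and suppose that for each j = 1, …, p the Galerkin condition wⱼ · y_h'(t̃ⱼ) = ∫_{t₀}^{t_f} l̃ⱼ(t) · J⁻¹ ∇H(y_h(t)) dt holds (an identity of vectors in ℝ^{2m}). Then H(y_h(t_f)) = H(y_h(t₀)); that is, the mimetic Galerkin integrator exactly preserves the energy of the Hamiltonian system. -/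
open Matrix Polynomial InnerProductSpace intervalIntegral
open scoped Gradient

/-!
Along `y_h` the energy changes at rate `⟪∇H(y_h), y_h'⟫`. As `y_h'` has degree `≤ p - 1` it is its
own Lagrange interpolant `∑ⱼ l̃ⱼ(t) y_h'(t̃ⱼ)`, so `H(y_h(t_f)) - H(y_h(t₀)) = ∑ⱼ ⟪gⱼ, y_h'(t̃ⱼ)⟫`
with `gⱼ = ∫ l̃ⱼ ∇H(y_h)`. The Galerkin condition reads `y_h'(t̃ⱼ) = wⱼ⁻¹ J⁻¹ gⱼ`, and each term
vanishes because `J⁻¹` is skew-symmetric.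
-/

namespace Matrix

variable {n R : Type*} [Fintype n] [CommRing R]

theorem nonsing_inv_neg [DecidableEq n] (A : Matrix n n R) : (-A)⁻¹ = -A⁻¹ := by
  by_cases hA : IsUnit A.det
  · exact inv_eq_left_inv (by rw [neg_mul_neg, nonsing_inv_mul _ hA])
  · have hnA : ¬IsUnit (-A).det := by
      rwa [det_neg, (((isUnit_one (M := R)).neg).pow _).mul_left_iff]
    rw [nonsing_inv_apply_not_isUnit _ hA, nonsing_inv_apply_not_isUnit _ hnA, neg_zero]

theorem transpose_nonsing_inv_eq_neg [DecidableEq n] {A : Matrix n n R} (hA : Aᵀ = -A) :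
    A⁻¹ᵀ = -A⁻¹ := by
  rw [transpose_nonsing_inv, hA, nonsing_inv_neg]

theorem dotProduct_mulVec_self_eq_zero [NoZeroDivisors R] [CharZero R] {A : Matrix n n R}
    (hA : Aᵀ = -A) (v : n → R) : v ⬝ᵥ (A *ᵥ v) = 0 := by
  rw [← CharZero.eq_neg_self_iff]
  calc v ⬝ᵥ (A *ᵥ v) = Aᵀ *ᵥ v ⬝ᵥ v := by
        rw [dotProduct_mulVec, ← mulVec_transpose, dotProduct_comm]
    _ = -(v ⬝ᵥ (A *ᵥ v)) := by rw [hA, neg_mulVec, neg_dotProduct, dotProduct_comm]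

def symplecticFin (m : ℕ) (R : Type*) [Ring R] : Matrix (Fin (2 * m)) (Fin (2 * m)) R :=
  of fun i j => if (i : ℕ) + m = j then 1 else if (j : ℕ) + m = i then -1 else 0

theorem symplecticFin_transpose (m : ℕ) (R : Type*) [Ring R] :
    (symplecticFin m R)ᵀ = -symplecticFin m R := by
  ext i j
  simp only [symplecticFin, transpose_apply, neg_apply, of_apply]
  split_ifs <;> first | omega | simp

end Matrix

theorem Polynomial.eq_sum_C_eval_mul_of_eval_eq_ite {ι R : Type*} [Fintype ι] [DecidableEq ι]
    [CommRing R] [IsDomain R] {v : ι → R} (hv : Function.Injective v) {L : ι → R[X]}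
    (hL : ∀ j, (L j).degree < Fintype.card ι)
    (hLv : ∀ i j, (L j).eval (v i) = if i = j then 1 else 0) {Q : R[X]}
    (hQ : Q.degree < Fintype.card ι) : Q = ∑ j, C (Q.eval (v j)) * L j := by
  refine eq_of_degrees_lt_of_eval_index_eq Finset.univ hv.injOn hQ ?_ fun i _ => ?_
  · simp_rw [Finset.card_univ, ← mem_degreeLT] at hL ⊢
    exact Submodule.sum_mem _ fun j _ => by
      rw [← smul_eq_C_mul]
      exact Submodule.smul_mem _ _ (hL j)
  · simp [eval_finsetSum, hLv]

theorem ContDiff.continuous_gradient {E : Type*} [NormedAddCommGroup E] [InnerProductSpace ℝ E]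
    [CompleteSpace E] {H : E → ℝ} (hH : ContDiff ℝ 1 H) : Continuous (∇ H) :=
  (toDual ℝ E).symm.continuous.comp (hH.continuous_fderiv one_ne_zero)

theorem ContDiff.hasDerivAt_comp {E : Type*} [NormedAddCommGroup E] [InnerProductSpace ℝ E]
    [CompleteSpace E] {H : E → ℝ} (hH : ContDiff ℝ 1 H) {γ : ℝ → E} {v : E} {t : ℝ}
    (hγ : HasDerivAt γ v t) : HasDerivAt (fun s => H (γ s)) ⟪∇ H (γ t), v⟫_ℝ t := by
  have hgrad := (hH.differentiable one_ne_zero (γ t)).hasGradientAt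
  simpa [Function.comp_def] using (hasGradientAt_iff_hasFDerivAt.mp hgrad).comp_hasDerivAt t hγ

theorem energy_eq_of_inner_integral_smul_gradient_eq_zero {E ι : Type*} [NormedAddCommGroup E]
    [InnerProductSpace ℝ E] [CompleteSpace E] [Fintype ι] {H : E → ℝ} (hH : ContDiff ℝ 1 H)
    {γ γ' : ℝ → E} (hγ : ∀ t, HasDerivAt γ (γ' t) t) {ℓ : ι → ℝ → ℝ} (hℓ : ∀ j, Continuous (ℓ j))
    {u : ι → E} (hγ' : ∀ t, γ' t = ∑ j, ℓ j t • u j) {a b : ℝ}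
    (horth : ∀ j, ⟪∫ t in a..b, ℓ j t • ∇ H (γ t), u j⟫_ℝ = 0) : H (γ b) = H (γ a) := by
  have hF : Continuous fun t => ∇ H (γ t) :=
    hH.continuous_gradient.comp (continuous_iff_continuousAt.2 fun t => (hγ t).continuousAt)
  have hint : ∀ j, IntervalIntegrable (fun t => ℓ j t • ∇ H (γ t)) MeasureTheory.volume a b :=
    fun j => ((hℓ j).smul hF).intervalIntegrable a b
  have hderiv (t : ℝ) : HasDerivAt (fun s => H (γ s)) (∑ j, ⟪ℓ j t • ∇ H (γ t), u j⟫_ℝ) t := by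
    convert hH.hasDerivAt_comp (hγ t) using 1
    simp only [hγ' t, inner_sum, real_inner_smul_left, real_inner_smul_right]
  rw [← sub_eq_zero, ← integral_eq_sub_of_hasDerivAt (fun t _ => hderiv t), integral_finsetSum]
  · refine Finset.sum_eq_zero fun j _ => ?_
    rw [← horth j, real_inner_comm, ← innerSL_apply_apply ℝ,
      ← ContinuousLinearMap.intervalIntegral_comp_comm _ (hint j)]
    simp only [innerSL_apply_apply, real_inner_comm]
  · exact fun j _ => (((hℓ j).smul hF).inner continuous_const).intervalIntegrable a b
  · exact (continuous_finsetSum _ fun j _ =>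
      ((hℓ j).smul hF).inner continuous_const).intervalIntegrable a b

namespace EuclideanSpace

variable {ι : Type*} [Fintype ι]

theorem apply_eq_eval_derivative_of_hasDerivAt {γ : ℝ → EuclideanSpace ℝ ι} {P : ι → ℝ[X]}
    (hγ : ∀ t i, γ t i = (P i).eval t) {v : EuclideanSpace ℝ ι} {t : ℝ}
    (hv : HasDerivAt γ v t) (i : ι) : v i = (P i).derivative.eval t := by
  have hproj := (EuclideanSpace.proj (𝕜 := ℝ) i).hasFDerivAt.comp_hasDerivAt t hv
  refine hproj.unique ?_
  simpa [Function.comp_def, hγ] using (P i).hasDerivAt t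

theorem eq_sum_lagrange_smul_of_hasDerivAt {κ : Type*} [Fintype κ] [DecidableEq κ]
    {γ γ' : ℝ → EuclideanSpace ℝ ι} {P : ι → ℝ[X]} (hγ : ∀ t i, γ t i = (P i).eval t)
    (hγ' : ∀ t, HasDerivAt γ (γ' t) t) (hP : ∀ i, (P i).degree ≤ Fintype.card κ)
    {v : κ → ℝ} (hv : Function.Injective v) {L : κ → ℝ[X]}
    (hL : ∀ j, (L j).degree < Fintype.card κ)
    (hLv : ∀ i j, (L j).eval (v i) = if i = j then 1 else 0) (t : ℝ) :
    γ' t = ∑ j, (L j).eval t • γ' (v j) := by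
  ext i
  have hdeg : (P i).derivative.degree < Fintype.card κ := by
    rcases eq_or_ne (P i) 0 with h | h
    · simp [h]
    · exact (degree_derivative_lt h).trans_le (hP i)
  rw [apply_eq_eval_derivative_of_hasDerivAt hγ (hγ' t) i,
    eq_sum_C_eval_mul_of_eval_eq_ite hv hL hLv hdeg]
  simp [eval_finsetSum, apply_eq_eval_derivative_of_hasDerivAt hγ (hγ' _), mul_comm]

theorem inner_toLp_mulVec_self_eq_zero {B : Matrix ι ι ℝ} (hB : Bᵀ = -B)
    (x : EuclideanSpace ℝ ι) : ⟪x, WithLp.toLp 2 (B *ᵥ x.ofLp)⟫_ℝ = 0 := by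
  rw [inner_eq_star_dotProduct, star_trivial, dotProduct_comm, dotProduct_mulVec_self_eq_zero hB]

theorem integral_smul_toLp_mulVec (B : Matrix ι ι ℝ) {ℓ : ℝ → ℝ} {f : ℝ → EuclideanSpace ℝ ι}
    {a b : ℝ}
    (hf : IntervalIntegrable (fun t => ℓ t • f t) MeasureTheory.volume a b) :
    ∫ t in a..b, ℓ t • WithLp.toLp 2 (B *ᵥ (f t).ofLp) =
      WithLp.toLp 2 (B *ᵥ (∫ t in a..b, ℓ t • f t).ofLp) := by
  classical
  have := ((Matrix.toLpLin 2 2 B).toContinuousLinearMap).intervalIntegral_comp_comm hf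
  simpa [Matrix.toLpLin_apply, Matrix.mulVec_smul] using this

end EuclideanSpace

theorem mimetic_galerkin_integrator_preserves_energy_general
    (p m : ℕ)
    (t₀ tf : ℝ)
    (tn : Fin p → ℝ) (hmono : StrictMono tn)
    (w : Fin p → ℝ) (hw : ∀ k, w k ≠ 0)
    (L : Fin p → Polynomial ℝ) (hLdeg : ∀ j, (L j).natDegree ≤ p - 1)
    (hLdelta : ∀ i j : Fin p, (L j).eval (tn i) = if i = j then 1 else 0)
    (J : Matrix (Fin (2 * m)) (Fin (2 * m)) ℝ)
    (hJ : ∀ i j : Fin (2 * m),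
      J i j = if (i : ℕ) + m = (j : ℕ) then 1
        else if (j : ℕ) + m = (i : ℕ) then -1 else 0)
    (H : EuclideanSpace ℝ (Fin (2 * m)) → ℝ) (hH : ContDiff ℝ 1 H)
    (yh : ℝ → EuclideanSpace ℝ (Fin (2 * m)))
    (P : Fin (2 * m) → Polynomial ℝ) (hdeg : ∀ i, (P i).natDegree ≤ p)
    (hrep : ∀ t : ℝ, ∀ i : Fin (2 * m), yh t i = (P i).eval t)
    (yh' : ℝ → EuclideanSpace ℝ (Fin (2 * m)))
    (hyh' : ∀ t : ℝ, HasDerivAt yh (yh' t) t)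
    (hgal : ∀ j : Fin p,
      w j • yh' (tn j) =
        ∫ t in t₀..tf, (L j).eval t •
          ((WithLp.equiv 2 (Fin (2 * m) → ℝ)).symm
            (J⁻¹.mulVec ((WithLp.equiv 2 (Fin (2 * m) → ℝ)) (gradient H (yh t)))))) :
    H (yh tf) = H (yh t₀) := by
  have hJ_skew : J⁻¹ᵀ = -J⁻¹ := by
    rw [show J = symplecticFin m ℝ from Matrix.ext hJ]
    exact transpose_nonsing_inv_eq_neg (symplecticFin_transpose m ℝ)
  have hL_deg : ∀ j, (L j).degree < Fintype.card (Fin p) := fun j => by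
    rw [Fintype.card_fin]
    exact (degree_le_of_natDegree_le (hLdeg j)).trans_lt
      (by exact_mod_cast Nat.sub_one_lt_of_lt j.pos)
  have hP_deg : ∀ i, (P i).degree ≤ Fintype.card (Fin p) := fun i => by
    simpa using degree_le_of_natDegree_le (hdeg i)
  have hyh_cont : Continuous yh := continuous_iff_continuousAt.2 fun t => (hyh' t).continuousAt
  refine energy_eq_of_inner_integral_smul_gradient_eq_zero hH hyh' (fun j => (L j).continuous)
    (EuclideanSpace.eq_sum_lagrange_smul_of_hasDerivAt hrep hyh' hP_deg hmono.injective hL_deg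
      hLdelta) fun j => ?_
  have hvel : yh' (tn j) = (w j)⁻¹ • WithLp.toLp 2
      (J⁻¹ *ᵥ (∫ t in t₀..tf, (L j).eval t • ∇ H (yh t)).ofLp) := by
    rw [eq_inv_smul_iff₀ (hw j), hgal j]
    exact EuclideanSpace.integral_smul_toLp_mulVec _
      (((L j).continuous.smul (hH.continuous_gradient.comp hyh_cont)).intervalIntegrable _ _)
  rw [hvel, real_inner_smul_right, EuclideanSpace.inner_toLp_mulVec_self_eq_zero hJ_skew, mul_zero]

/-- The mimetic Galerkin integrator exactly preserves the energy of a
Hamiltonian system: if the polynomial approximation `y_h` (componentwise of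
degree ≤ p) satisfies, for each Lagrange basis polynomial `l̃ⱼ` of degree
p − 1 at the Gauss nodes `t̃ⱼ` with weights `wⱼ`, the Galerkin condition
`wⱼ y_h'(t̃ⱼ) = ∫_{t₀}^{t_f} l̃ⱼ(t) J⁻¹ ∇H(y_h(t)) dt`, then
`H(y_h(t_f)) = H(y_h(t₀))`. -/
theorem mimetic_galerkin_integrator_preserves_energy
    (p m : ℕ) (hp : 1 ≤ p) (hm : 1 ≤ m)
    (t₀ tf : ℝ) (ht : t₀ < tf)
    (tn : Fin p → ℝ) (htn : ∀ k, tn k ∈ Set.Icc t₀ tf) (hmono : StrictMono tn)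
    (w : Fin p → ℝ) (hw : ∀ k, w k ≠ 0)
    (L : Fin p → Polynomial ℝ) (hLdeg : ∀ j, (L j).natDegree ≤ p - 1)
    (hLdelta : ∀ i j : Fin p, (L j).eval (tn i) = if i = j then 1 else 0)
    (J : Matrix (Fin (2 * m)) (Fin (2 * m)) ℝ)
    (hJ : ∀ i j : Fin (2 * m),
      J i j = if (i : ℕ) + m = (j : ℕ) then 1
        else if (j : ℕ) + m = (i : ℕ) then -1 else 0)
    (H : EuclideanSpace ℝ (Fin (2 * m)) → ℝ) (hH : ContDiff ℝ 1 H)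
    (yh : ℝ → EuclideanSpace ℝ (Fin (2 * m)))
    (P : Fin (2 * m) → Polynomial ℝ) (hdeg : ∀ i, (P i).natDegree ≤ p)
    (hrep : ∀ t : ℝ, ∀ i : Fin (2 * m), yh t i = (P i).eval t)
    (yh' : ℝ → EuclideanSpace ℝ (Fin (2 * m)))
    (hyh' : ∀ t : ℝ, HasDerivAt yh (yh' t) t)
    (hgal : ∀ j : Fin p,
      w j • yh' (tn j) =
        ∫ t in t₀..tf, (L j).eval t •
          ((WithLp.equiv 2 (Fin (2 * m) → ℝ)).symm
            (J⁻¹.mulVec ((WithLp.equiv 2 (Fin (2 * m) → ℝ)) (gradient H (yh t)))))) :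
    H (yh tf) = H (yh t₀) :=
  mimetic_galerkin_integrator_preserves_energy_general p m t₀ tf tn hmono w hw L hLdeg hLdelta J hJ
    H hH yh P hdeg hrep yh' hyh' hgal
end
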